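/- Define φ(Δ) = (a_0, a_1, ..., a_{m-1}) − ((Σ_j a_j)/m)·(1,...,1), where a_0 < ... < a_{m-1} are the m-generators of a bounded, co-bounded m-invariant set Δ. Then φ(Δ) lies in the Weyl chamber V^m = {x ∈ ℝ^m : Σ x_i = 0, x_0 ≤ x_1 ≤ ... ≤ x_{m-1}}, and φ commutes with the actions: for each letter i ∈ [m], φ(i · Δ) = i · φ(Δ), where i acts on V^m by adding m to the i-th coordinate, subtracting 1 from all coordinates, and re-sorting. -/

import Mathlib

/-- The shift of a set of integers: `Δ + k`. -/
def shiftSet (Δ : Set ℤ) (k : ℤ) : Set ℤ := (· + k) '' Δ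

/-- `Δ` is `k`-invariant if `Δ + k ⊆ Δ`. -/
def Invariant (k : ℤ) (Δ : Set ℤ) : Prop := shiftSet Δ k ⊆ Δ

/-- `Δ` is bounded (has a minimum element). -/
def HasMin (Δ : Set ℤ) : Prop := ∃ a ∈ Δ, ∀ x ∈ Δ, a ≤ x

/-- `Δ` is co-bounded: contains all sufficiently large integers. -/
def CoBounded (Δ : Set ℤ) : Prop := ∃ N : ℤ, ∀ x : ℤ, N ≤ x → x ∈ Δ

/-- The `k`-generators of `Δ`: elements `a ∈ Δ` with `a - k ∉ Δ`, i.e. `Δ \ (Δ + k)`. -/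
def gens (k : ℤ) (Δ : Set ℤ) : Set ℤ := Δ \ shiftSet Δ k

/-- The `(j+1)`-st smallest element of a set of integers. -/
noncomputable def nthSmallest : ℕ → Set ℤ → ℤ
  | 0, S => sInf S
  | j+1, S => nthSmallest j (S \ {sInf S})

/-- The letter `j ∈ [m]` acts on an `m`-invariant set by removing its `(j+1)`-st
smallest `m`-generator. -/
noncomputable def letterAct (m : ℤ) (j : ℕ) (Δ : Set ℤ) : Set ℤ :=
  Δ \ {nthSmallest j (gens m Δ)}

/-- `steps m p Δ i = p_{i-1} ⋯ p_1 p_0 ⋅ Δ`: the word acts one letter at a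
time, the letter `p 0` (rightmost) acting first. -/
noncomputable def steps (m : ℤ) (p : ℕ → ℕ) (Δ : Set ℤ) : ℕ → Set ℤ
  | 0 => Δ
  | i+1 => letterAct m (p i) (steps m p Δ i)
/-- The shift during the action of letter `i` on `ℝ^m`: add `m` to coordinate `i`
and subtract `1` from every coordinate. -/
def shiftVec (m : ℕ) (i : Fin m) (x : Fin m → ℝ) : Fin m → ℝ :=
  fun j => x j - 1 + if j = i then (m : ℝ) else 0

/-- Sort the coordinates of a vector into weakly increasing order. -/
noncomputable def sortVec {m : ℕ} (x : Fin m → ℝ) : Fin m → ℝ := x ∘ Tuple.sort x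

/-- The action of the letter `i ∈ [m]` on `V^m`: shift, then re-sort. -/
noncomputable def letterV (m : ℕ) (i : Fin m) (x : Fin m → ℝ) : Fin m → ℝ :=
  sortVec (shiftVec m i x)

/-- `stepsV m p x i = p_{i-1} ⋯ p_1 p_0 ⋅ x`: the word acts letter by letter, the
letter `p 0` (rightmost) acting first. -/
noncomputable def stepsV (m : ℕ) (p : ℕ → Fin m) (x : Fin m → ℝ) : ℕ → (Fin m → ℝ)
  | 0 => x
  | k+1 => letterV m (p k) (stepsV m p x k)

/-- Membership in the Weyl chamber `V^m`: coordinates sum to `0` and are weakly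
increasing. -/
def InV (m : ℕ) (x : Fin m → ℝ) : Prop := (∑ j, x j) = 0 ∧ Monotone x

/-- The Euclidean norm on `ℝ^m`. -/
noncomputable def eNorm {m : ℕ} (x : Fin m → ℝ) : ℝ := Real.sqrt (∑ j, (x j) ^ 2)

/-- The map `φ` sending a bounded co-bounded `m`-invariant set `Δ` with `m`-generators
`a_0 < … < a_{m-1}` to `(a_0, …, a_{m-1}) - (∑ a_j / m)·(1,…,1)`. -/
noncomputable def phi (m : ℕ) (Δ : Set ℤ) : Fin m → ℝ :=
  fun j => (nthSmallest j (gens m Δ) : ℝ) -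
    (∑ k : Fin m, (nthSmallest (k : ℕ) (gens m Δ) : ℝ)) / m

/-!
The `m`-generators of `Δ` form a system of representatives of `ℤ/mℤ`: two generators in the same
class would differ by a positive multiple of `m`, contradicting invariance, and the least element
of `Δ` in a class is a generator. So there are exactly `m` of them, and `φ(Δ)` is their increasing
enumeration minus its mean, which lies in `V^m`. Removing the generator `a_i` makes `a_i + m` a
generator and leaves the others unchanged, so the generators, kept in their old order, change by
`+m` in position `i` and their mean by `+1`: this is the shifted vector of `i · φ(Δ)`, and sorting
it gives `φ(i · Δ)`.
-/

section Generators

variable {k : ℤ} {Δ : Set ℤ}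

lemma mem_shiftSet {x : ℤ} : x ∈ shiftSet Δ k ↔ x - k ∈ Δ :=
  ⟨by rintro ⟨y, hy, rfl⟩; simpa using hy, fun h => ⟨x - k, h, by ring⟩⟩

lemma mem_gens {x : ℤ} : x ∈ gens k Δ ↔ x ∈ Δ ∧ x - k ∉ Δ := by
  rw [gens, Set.mem_sdiff, mem_shiftSet]

lemma gens_finite (hb : HasMin Δ) (hc : CoBounded Δ) : (gens k Δ).Finite := by
  obtain ⟨a, -, ha⟩ := hb
  obtain ⟨N, hN⟩ := hc
  refine (Set.finite_Icc a (N + k)).subset fun x hx => ?_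
  rw [mem_gens] at hx
  exact ⟨ha x hx.1, not_lt.mp fun hlt => hx.2 (hN _ (by omega))⟩

lemma Invariant.add_mul_mem (hI : Invariant k Δ) {a : ℤ} (ha : a ∈ Δ) (n : ℕ) :
    a + k * n ∈ Δ := by
  induction n with
  | zero => simpa using ha
  | succ n ih => simpa [mul_add, ← add_assoc] using hI ⟨_, ih, rfl⟩

lemma Invariant.add_mul_succ_notMem_gens (hI : Invariant k Δ) {a : ℤ} (ha : a ∈ Δ) (n : ℕ) :
    a + k * (n + 1) ∉ gens k Δ := fun h =>
  (mem_gens.mp h).2 (by convert hI.add_mul_mem ha n using 1; ring)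

lemma Invariant.eq_of_mem_gens_of_modEq (hI : Invariant k Δ) {x y : ℤ} (hx : x ∈ gens k Δ)
    (hy : y ∈ gens k Δ) (hxy : x ≡ y [ZMOD k]) : x = y := by
  obtain ⟨c, hc⟩ := Int.modEq_iff_dvd.mp hxy
  rcases Int.eq_nat_or_neg c with ⟨_ | n, rfl | rfl⟩
  · simp at hc; omega
  · simp at hc; omega
  · have hyx : y = x + k * (n + 1) := by push_cast at hc; linarith
    exact absurd hy (hyx ▸ hI.add_mul_succ_notMem_gens (mem_gens.mp hx).1 n)
  · have hxy : x = y + k * (n + 1) := by push_cast at hc; linarith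
    exact absurd hx (hxy ▸ hI.add_mul_succ_notMem_gens (mem_gens.mp hy).1 n)

lemma exists_mem_gens_modEq (hk : 0 < k) (hb : HasMin Δ) (hc : CoBounded Δ) (r : ℤ) :
    ∃ x ∈ gens k Δ, x ≡ r [ZMOD k] := by
  obtain ⟨a, -, ha⟩ := hb
  obtain ⟨N, hN⟩ := hc
  set C : Set ℤ := {x | x ∈ Δ ∧ x ≡ r [ZMOD k]}
  have hCne : C.Nonempty :=
    ⟨N + (r - N) % k, hN _ (by linarith [Int.emod_nonneg (r - N) hk.ne']), by
      simpa using (Int.mod_modEq (r - N) k).add_left N⟩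
  have hCbdd : BddBelow C := ⟨a, fun x hx => ha x hx.1⟩
  obtain ⟨hmemΔ, hmodEq⟩ := Int.csInf_mem hCne hCbdd
  refine ⟨sInf C, mem_gens.mpr ⟨hmemΔ, fun hsub => ?_⟩, hmodEq⟩
  have : sInf C ≤ sInf C - k :=
    csInf_le hCbdd ⟨hsub, (Int.modEq_iff_dvd.mpr (by simp)).trans hmodEq⟩
  omega

lemma ncard_gens {m : ℕ} (hm : 0 < m) (hI : Invariant m Δ) (hb : HasMin Δ)
    (hc : CoBounded Δ) : (gens m Δ).ncard = m := by
  have : NeZero m := ⟨hm.ne'⟩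
  let residue : gens m Δ → ZMod m := fun x => (x : ℤ)
  have hbij : Function.Bijective residue := by
    refine ⟨fun x y hxy => Subtype.ext <| hI.eq_of_mem_gens_of_modEq x.2 y.2 <|
      (ZMod.intCast_eq_intCast_iff _ _ _).mp hxy, fun r => ?_⟩
    obtain ⟨x, hx, hxr⟩ := exists_mem_gens_modEq (Int.natCast_pos.mpr hm) hb hc (r.cast : ℤ)
    exact ⟨⟨x, hx⟩, ((ZMod.intCast_eq_intCast_iff _ _ _).mpr hxr).trans (ZMod.intCast_zmod_cast r)⟩
  rw [← Nat.card_coe_set_eq, Nat.card_eq_of_bijective residue hbij, Nat.card_zmod]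

lemma gens_diff_singleton (hI : Invariant k Δ) {a : ℤ} (ha : a ∈ gens k Δ) :
    gens k (Δ \ {a}) = insert (a + k) (gens k Δ \ {a}) := by
  obtain ⟨haΔ, hak⟩ := mem_gens.mp ha
  have hk : k ≠ 0 := by rintro rfl; simp_all
  have haddΔ : a + k ∈ Δ := hI ⟨a, haΔ, rfl⟩
  ext x
  simp only [mem_gens, Set.mem_sdiff, Set.mem_singleton_iff, Set.mem_insert_iff]
  by_cases hx : x = a + k
  · subst hx; simp_all
  · have : x - k ≠ a := fun h => hx (by omega)
    tauto

lemma coe_insert_erase_eq_gens (hI : Invariant k Δ) {s : Finset ℤ} (hs : ↑s = gens k Δ) {a : ℤ}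
    (ha : a ∈ s) : ↑(insert (a + k) (s.erase a)) = gens k (Δ \ {a}) := by
  rw [Finset.coe_insert, Finset.coe_erase, hs, gens_diff_singleton hI (by rw [← hs]; exact ha)]

end Generators

lemma Finset.orderEmbOfFin_succ {α : Type*} [LinearOrder α] {s : Finset α} {k : ℕ}
    (h : s.card = k + 1) (j : Fin k) :
    s.orderEmbOfFin h j.succ =
      (s.erase (s.min' (Finset.card_pos.mp (h ▸ k.succ_pos)))).orderEmbOfFin
        (by rw [Finset.card_erase_of_mem (Finset.min'_mem _ _), h, Nat.add_sub_cancel]) j := by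
  refine congrFun (Finset.orderEmbOfFin_unique _ (fun x => ?_)
    ((s.orderEmbOfFin h).strictMono.comp Fin.strictMono_succ)) j
  refine Finset.mem_erase.mpr ⟨fun hmin => Fin.succ_ne_zero x ?_, Finset.orderEmbOfFin_mem s h _⟩
  rw [← Finset.orderEmbOfFin_zero h k.succ_pos] at hmin
  exact (s.orderEmbOfFin h).injective hmin

lemma Finset.update_orderEmbOfFin_mem {α : Type*} [LinearOrder α] {s : Finset α} {k : ℕ}
    (h : s.card = k) (i : Fin k) (b : α) (j : Fin k) :
    Function.update (s.orderEmbOfFin h) i b j ∈ insert b (s.erase (s.orderEmbOfFin h i)) := by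
  rw [Function.update_apply]
  split_ifs with hj
  · exact Finset.mem_insert_self _ _
  · exact Finset.mem_insert_of_mem
      (Finset.mem_erase.mpr ⟨(s.orderEmbOfFin h).injective.ne hj, s.orderEmbOfFin_mem h j⟩)

lemma nthSmallest_coe_finset (j : ℕ) {k : ℕ} (s : Finset ℤ) (h : s.card = k) (hj : j < k) :
    nthSmallest j ↑s = s.orderEmbOfFin h ⟨j, hj⟩ := by
  induction j generalizing k s with
  | zero =>
    rw [nthSmallest, Finset.orderEmbOfFin_zero h hj, Finset.Nonempty.csInf_eq_min']
  | succ j ih =>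
    obtain ⟨k, rfl⟩ : ∃ k', k = k' + 1 := ⟨k - 1, by omega⟩
    rw [nthSmallest, Finset.Nonempty.csInf_eq_min' (Finset.card_pos.mp (h ▸ k.succ_pos)),
      ← Finset.coe_erase, ih _ _ (Nat.lt_of_succ_lt_succ hj), ← Finset.orderEmbOfFin_succ]
    · rfl
    · rw [Finset.card_erase_of_mem (Finset.min'_mem _ _), h, Nat.add_sub_cancel]

lemma sortVec_comp_perm {m : ℕ} {f : Fin m → ℝ} (hf : Monotone f) (π : Equiv.Perm (Fin m)) :
    sortVec (f ∘ π) = f := by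
  have hcomp : f ∘ π ∘ (π⁻¹ : Equiv.Perm (Fin m)) = f := by
    ext j; simp
  exact (Tuple.unique_monotone (Tuple.monotone_sort (f ∘ π)) (hcomp.symm ▸ hf)).trans hcomp

lemma sortVec_eq_of_injective {m : ℕ} {c f : Fin m → ℝ} (hf : Monotone f)
    (hc : Function.Injective c) (hcf : ∀ j, c j ∈ Set.range f) : sortVec c = f := by
  choose τ hτ using hcf
  have hτinj : Function.Injective τ := fun j k hjk => hc (by rw [← hτ j, ← hτ k, hjk])
  have hcτ : c = f ∘ Equiv.ofBijective τ hτinj.bijective_of_finite := funext fun j => (hτ j).symm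
  rw [hcτ, sortVec_comp_perm hf]

section Phi

variable {m : ℕ} {Δ : Set ℤ}

lemma sum_phi (hm : 0 < m) (Δ : Set ℤ) : ∑ j, phi m Δ j = 0 := by
  have hm' : (m : ℝ) ≠ 0 := Nat.cast_ne_zero.mpr hm.ne'
  simp only [phi, Finset.sum_sub_distrib, Finset.sum_const, Finset.card_univ, Fintype.card_fin,
    nsmul_eq_mul, mul_div_cancel₀ _ hm', sub_self]

lemma phi_eq_of_coe_eq_gens {s : Finset ℤ} (hs : ↑s = gens m Δ) (h : s.card = m) :
    phi m Δ = fun j => (s.orderEmbOfFin h j : ℝ) - (∑ x ∈ s, (x : ℝ)) / m := by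
  have henum (j : Fin m) : nthSmallest j (gens m Δ) = s.orderEmbOfFin h j := by
    rw [← hs, nthSmallest_coe_finset j s h j.isLt]
  have hsum : ∑ j : Fin m, (s.orderEmbOfFin h j : ℝ) = ∑ x ∈ s, (x : ℝ) :=
    (Fintype.sum_equiv (s.orderIsoOfFin h).toEquiv _ _ fun _ => rfl).trans
      (Finset.sum_coe_sort s _)
  ext j
  simp only [phi, henum, hsum]

lemma monotone_phi {s : Finset ℤ} (hs : ↑s = gens m Δ) (h : s.card = m) :
    Monotone (phi m Δ) := by
  rw [phi_eq_of_coe_eq_gens hs h]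
  exact fun j k hjk => sub_le_sub_right (Int.cast_le.mpr ((s.orderEmbOfFin h).monotone hjk)) _

lemma Function.Injective.update {α β : Type*} [DecidableEq α] {f : α → β}
    (hf : Function.Injective f) (a : α) {b : β} (hb : b ∉ Set.range f) :
    Function.Injective (Function.update f a b) := by
  intro x y hxy
  by_cases hx : x = a <;> by_cases hy : y = a
  · rw [hx, hy]
  · subst hx
    rw [Function.update_self, Function.update_of_ne hy] at hxy
    exact absurd ⟨y, hxy.symm⟩ hb
  · subst hy
    rw [Function.update_self, Function.update_of_ne hx] at hxy
    exact absurd ⟨x, hxy⟩ hb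
  · rwa [Function.update_of_ne hx, Function.update_of_ne hy, hf.eq_iff] at hxy

lemma phi_letterAct (hI : Invariant m Δ) {s : Finset ℤ} (hs : ↑s = gens m Δ)
    (h : s.card = m) (i : Fin m) : phi m (letterAct m i Δ) = letterV m i (phi m Δ) := by
  classical
  set e := s.orderEmbOfFin h
  have hei : e i ∈ s := s.orderEmbOfFin_mem h i
  have hgen : e i ∈ gens m Δ := by rw [← hs]; exact hei
  have hnotMem : e i + m ∉ s := by
    rw [← Finset.mem_coe, hs]
    simpa using hI.add_mul_succ_notMem_gens (mem_gens.mp hgen).1 0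
  set s' := insert (e i + m) (s.erase (e i))
  have hs' : ↑s' = gens m (letterAct m i Δ) := by
    rw [letterAct, ← hs, nthSmallest_coe_finset i s h i.isLt, Fin.eta]
    exact coe_insert_erase_eq_gens hI hs hei
  have hnotMem' : e i + m ∉ s.erase (e i) := fun hmem => hnotMem (Finset.mem_of_mem_erase hmem)
  have h' : s'.card = m := by
    rw [Finset.card_insert_of_notMem hnotMem', Finset.card_erase_of_mem hei, h,
      Nat.sub_add_cancel i.pos]
  have hsum : ∑ x ∈ s', (x : ℝ) = ∑ x ∈ s, (x : ℝ) + m := by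
    rw [Finset.sum_insert hnotMem', Finset.sum_erase_eq_sub hei]
    push_cast; ring
  -- the generators of `i · Δ`, listed in the order of those of `Δ`
  set b := Function.update (⇑e) i (e i + m)
  have hb_inj : Function.Injective b :=
    e.injective.update i (by rwa [Finset.range_orderEmbOfFin])
  have hshift : shiftVec m i (phi m Δ) = fun j => (b j : ℝ) - (∑ x ∈ s', (x : ℝ)) / m := by
    have hm : (m : ℝ) ≠ 0 := Nat.cast_ne_zero.mpr i.pos.ne'
    ext j
    simp only [shiftVec, phi_eq_of_coe_eq_gens hs h, hsum, b, Function.update_apply]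
    split_ifs with hj
    · subst hj; push_cast; field_simp; ring
    · field_simp; ring
  symm
  refine sortVec_eq_of_injective (monotone_phi hs' h') ?_ fun j => ?_
  · rw [hshift]
    exact fun j k hjk => hb_inj (by simpa using hjk)
  · obtain ⟨k, hk⟩ : b j ∈ Set.range (s'.orderEmbOfFin h') := by
      rw [Finset.range_orderEmbOfFin]; exact s.update_orderEmbOfFin_mem h i _ j
    exact ⟨k, by simp only [hshift, phi_eq_of_coe_eq_gens hs' h', hk]⟩

end Phi

/-- `φ(Δ)` lies in the Weyl chamber `V^m`, and `φ` intertwines the letter action on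
invariant sets with the letter action on `V^m`. -/
theorem phi_mem_and_equivariant (m : ℕ) (hm : 0 < m) (Δ : Set ℤ)
    (hI : Invariant m Δ) (hb : HasMin Δ) (hc : CoBounded Δ) :
    InV m (phi m Δ) ∧
    ∀ i : Fin m, phi m (letterAct m (i : ℕ) Δ) = letterV m i (phi m Δ) := by
  obtain ⟨s, hs⟩ := (gens_finite hb hc).exists_finset_coe
  have hcard : s.card = m := by rw [← Set.ncard_coe_finset, hs, ncard_gens hm hI hb hc]
  exact ⟨⟨sum_phi hm Δ, monotone_phi hs hcard⟩, phi_letterAct hI hs hcard⟩
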